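/- Let k ∈ U(p+q) satisfy k^2 = I and suppose the characteristic polynomial of k is (X-1)^p (X+1)^q. If k normalizes the diagonal torus T and the induced permutation (Weyl group element) of k is a product of l disjoint transpositions times a diagonal sign matrix, then l ≤ q. -/
import Mathlib


open Polynomial

/-- Let `k ∈ U(p+q)` satisfy `k² = I`, with characteristic polynomial
`(X-1)^p (X+1)^q` (`p ≥ q ≥ 1`). If `k` is a monomial matrix (so normalizes the
diagonal torus) whose induced permutation is an involution that is a product of
`l` disjoint transpositions (i.e. moves exactly `2l` indices), then `l ≤ q`. -/
theorem stmt8 (p q : ℕ) (hq : 1 ≤ q) (hpq : q ≤ p)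
    (k : Matrix (Fin (p + q)) (Fin (p + q)) ℂ)
    (hunit : k ∈ Matrix.unitaryGroup (Fin (p + q)) ℂ)
    (hinv : k * k = 1)
    (hchar : k.charpoly = (X - C 1) ^ p * (X + C 1) ^ q)
    (σ : Equiv.Perm (Fin (p + q))) (d : Fin (p + q) → ℂ)
    (hmono : k = fun i j => if i = σ j then d j else 0)
    (l : ℕ)
    (hl : (Finset.univ.filter fun i => σ i ≠ i).card = 2 * l) :
    l ≤ q := by
  classical
  -- trace from charpoly
  have hcard : Fintype.card (Fin (p + q)) = p + q := by simp
  have hndeg : k.charpoly.natDegree = p + q := by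
    rw [Matrix.charpoly_natDegree_eq_dim, hcard]
  haveI : Nonempty (Fin (p+q)) := ⟨⟨0, by omega⟩⟩
  have htrace : k.trace = (p : ℂ) - q := by
    have h1 : k.trace = -k.charpoly.coeff (Fintype.card (Fin (p+q)) - 1) :=
      Matrix.trace_eq_neg_charpoly_coeff k
    have h2 : k.charpoly.coeff (Fintype.card (Fin (p+q)) - 1) = k.charpoly.nextCoeff := by
      rw [nextCoeff_of_natDegree_pos, hndeg, hcard]
      omega
    have h3 : k.charpoly.nextCoeff = (q : ℂ) - p := by
      have m1 : ((X - C (1:ℂ)) ^ p).Monic := (monic_X_sub_C 1).pow p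
      have m2 : ((X + C (1:ℂ)) ^ q).Monic := (monic_X_add_C 1).pow q
      rw [hchar, m1.nextCoeff_mul m2, (monic_X_sub_C (1:ℂ)).nextCoeff_pow,
        (monic_X_add_C (1:ℂ)).nextCoeff_pow, nextCoeff_X_sub_C]
      have : (X + C (1:ℂ)).nextCoeff = 1 := by
        simpa using nextCoeff_X_add_C (1:ℂ)
      rw [this]
      push_cast
      simp [nsmul_eq_mul]
      ring
    rw [h1, h2, h3]; ring
  -- trace as sum over fixed points
  set F : Finset (Fin (p+q)) := Finset.univ.filter fun i => σ i = i with hF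
  have htr2 : k.trace = ∑ i ∈ F, d i := by
    rw [Matrix.trace]
    rw [Finset.sum_filter]
    apply Finset.sum_congr rfl
    intro i _
    simp only [Matrix.diag, hmono]
    by_cases h : σ i = i
    · simp [h, eq_comm]
    · have : ¬ i = σ i := fun he => h he.symm
      simp [h, this]
  -- each fixed d i is ±1
  have hd : ∀ i ∈ F, d i = 1 ∨ d i = -1 := by
    intro i hi
    simp only [hF, Finset.mem_filter] at hi
    have hfix : σ i = i := hi.2
    have h1 : (k * k) i i = 1 := by rw [hinv]; simp [Matrix.one_apply]
    rw [Matrix.mul_apply] at h1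
    have h2 : ∑ j, k i j * k j i = d i * d i := by
      rw [Finset.sum_eq_single i]
      · simp [hmono, hfix]
      · intro j _ hj
        simp only [hmono]
        have : ¬ j = σ i := by rw [hfix]; exact hj
        simp [this]
      · simp
    rw [h2] at h1
    exact mul_self_eq_one_iff.mp h1
  -- real part inequality
  have hre : ((p : ℝ) - q) ≤ (F.card : ℝ) := by
    have : (k.trace).re = (p : ℝ) - q := by rw [htrace]; simp
    rw [← this, htr2]
    rw [Complex.re_sum]
    calc ∑ i ∈ F, (d i).re ≤ ∑ i ∈ F, (1:ℝ) := by
          apply Finset.sum_le_sum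
          intro i hi
          rcases hd i hi with h | h <;> simp [h]
      _ = F.card := by simp
  have hsplit : F.card + 2 * l = p + q := by
    rw [hF, ← hl]
    have h := Finset.card_filter_add_card_filter_not
      (s := (Finset.univ : Finset (Fin (p+q)))) (p := fun i => σ i = i)
    simpa using h
  have hc : (F.card : ℝ) + 2 * l = (p : ℝ) + q := by exact_mod_cast hsplit
  have : (l : ℝ) ≤ q := by linarith
  exact_mod_cast this
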